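/- arXiv:2210.12719 — 3 statements merged into one kernel-verified Lean document; each statement's English description precedes it below -/
import Mathlib

section
/- Let ι be a finite index set, let p : ι → ℝ be nonnegative weights on a finite set s ⊆ ι with total mass P := Σ_{i ∈ s} p i satisfying P ∈ (0,1]. If there exist two distinct indices i ≠ j in s with p i > 0 and p j > 0, then P·log(1/P) < Σ_{i ∈ s} (p i)·log(1/(p i)). -/
theorem entropy_split_finset {ι : Type*} (s : Finset ι) (p : ι → ℝ)
    (hnn : ∀ i ∈ s, 0 ≤ p i) (P : ℝ) (hP : P = ∑ i ∈ s, p i)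
    (hP0 : 0 < P) (hP1 : P ≤ 1)
    (i j : ι) (hi : i ∈ s) (hj : j ∈ s) (hij : i ≠ j)
    (hpi : 0 < p i) (hpj : 0 < p j) :
    P * Real.log (1 / P) < ∑ k ∈ s, p k * Real.log (1 / p k) := by
  classical
  have hle : ∀ k ∈ s, p k ≤ P := by
    intro k hk
    rw [hP]
    exact Finset.single_le_sum (fun x hx => hnn x hx) hk
  have key : ∀ k ∈ s, p k * Real.log (1 / P) ≤ p k * Real.log (1 / p k) := by
    intro k hk
    rcases (hnn k hk).lt_or_eq with hpos | hzero
    · apply mul_le_mul_of_nonneg_left _ (le_of_lt hpos)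
      rw [one_div, one_div, Real.log_inv, Real.log_inv, neg_le_neg_iff]
      exact Real.log_le_log hpos (hle k hk)
    · simp [← hzero]
  have hiP : p i < P := by
    have : p i + p j ≤ P := by
      rw [hP, ← Finset.sum_erase_add s p hi, add_comm]
      gcongr
      exact Finset.single_le_sum (fun x hx => hnn x (Finset.mem_of_mem_erase hx))
        (Finset.mem_erase.mpr ⟨hij.symm, hj⟩)
    linarith
  have strict : p i * Real.log (1 / P) < p i * Real.log (1 / p i) := by
    apply mul_lt_mul_of_pos_left _ hpi
    rw [one_div, one_div, Real.log_inv, Real.log_inv, neg_lt_neg_iff]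
    exact Real.log_lt_log hpi hiP
  calc P * Real.log (1 / P) = ∑ k ∈ s, p k * Real.log (1 / P) := by
        rw [← Finset.sum_mul, ← hP]
      _ < ∑ k ∈ s, p k * Real.log (1 / p k) :=
        Finset.sum_lt_sum key ⟨i, hi, strict⟩
end

section
/- Let W be a finite type with a probability vector ρ : W → ℝ (ρ w ≥ 0, Σ_w ρ w = 1), let Ω be a finite type with decidable equality, let B ≥ 2, and let g : Fin B → W → Ω be a family of maps with g i₀ = g j₀ for some indices i₀ ≠ j₀. For a family h : Fin B → W → Ω, let H(h) denote the Shannon entropy of the pushforward of ρ under the map w ↦ (i ↦ h i w) : W → (Fin B → Ω). Then for any map g' : W → Ω, replacing the j₀-th coordinate of g by g' does not decrease the entropy: H(g) ≤ H(g with coordinate j₀ replaced by g'). -/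
/-! Since `x ↦ -x log x` is subadditive on `[0, ∞)`, merging fibres cannot increase the entropy of a
pushforward. When `g i₀ = g j₀`, the original embedding is recovered from the modified one by
overwriting coordinate `j₀` with coordinate `i₀`, hence it is a coarsening of the modified one. -/

/-- Shannon entropy of the pushforward of the vector `ρ` on `W` under `f : W → T`:
the pushforward assigns to each `t` the total mass `∑_{w : f w = t} ρ w`. -/
noncomputable def pushEnt {W T : Type*} [Fintype W] [Fintype T] [DecidableEq T]
    (ρ : W → ℝ) (f : W → T) : ℝ :=
  ∑ t, (∑ w ∈ Finset.univ.filter fun w => f w = t, ρ w) *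
    Real.log (1 / ∑ w ∈ Finset.univ.filter fun w => f w = t, ρ w)

open Finset Real

lemma Real.mul_log_le_mul_log_add {a b : ℝ} (ha : 0 ≤ a) (hb : 0 ≤ b) :
    a * log a ≤ a * log (a + b) := by
  rcases ha.eq_or_lt with rfl | ha'
  · simp
  · exact mul_le_mul_of_nonneg_left (log_le_log ha' (by linarith)) ha

lemma Real.negMulLog_add_le {a b : ℝ} (ha : 0 ≤ a) (hb : 0 ≤ b) :
    negMulLog (a + b) ≤ negMulLog a + negMulLog b := by
  have hab := mul_log_le_mul_log_add ha hb
  have hba := mul_log_le_mul_log_add hb ha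
  rw [add_comm b a] at hba
  simp only [negMulLog, neg_mul]
  linarith

lemma Real.negMulLog_sum_le {ι : Type*} (s : Finset ι) (f : ι → ℝ) (hf : ∀ i ∈ s, 0 ≤ f i) :
    negMulLog (∑ i ∈ s, f i) ≤ ∑ i ∈ s, negMulLog (f i) :=
  le_sum_of_subadditive_on_pred negMulLog (0 ≤ ·) (by simp)
    (fun _ _ => negMulLog_add_le) (fun _ _ => add_nonneg) f hf

section pushEnt

variable {W T S : Type*} [Fintype W] [Fintype T] [DecidableEq T] [DecidableEq S]

lemma pushEnt_eq_sum_negMulLog (ρ : W → ℝ) (f : W → T) :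
    pushEnt ρ f = ∑ t, negMulLog (∑ w with f w = t, ρ w) := by
  refine sum_congr rfl fun t _ => ?_
  rw [one_div, log_inv, negMulLog]
  ring

lemma sum_filter_comp_eq_sum_fiberwise (ρ : W → ℝ) (f : W → T) (φ : T → S) (s : S) :
    ∑ w with φ (f w) = s, ρ w = ∑ t with φ t = s, ∑ w with f w = t, ρ w := by
  rw [sum_fiberwise_eq_sum_filter]
  simp only [mem_filter, mem_univ, true_and]

variable [Fintype S]

lemma pushEnt_comp_le (ρ : W → ℝ) (hρ : ∀ w, 0 ≤ ρ w) (f : W → T) (φ : T → S) :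
    pushEnt ρ (φ ∘ f) ≤ pushEnt ρ f := by
  rw [pushEnt_eq_sum_negMulLog, pushEnt_eq_sum_negMulLog]
  calc ∑ s, negMulLog (∑ w with φ (f w) = s, ρ w)
      ≤ ∑ s, ∑ t with φ t = s, negMulLog (∑ w with f w = t, ρ w) := by
        gcongr with s
        rw [sum_filter_comp_eq_sum_fiberwise]
        exact negMulLog_sum_le _ _ fun t _ => sum_nonneg fun w _ => hρ w
    _ = ∑ t, negMulLog (∑ w with f w = t, ρ w) := sum_fiberwise _ _ _

end pushEnt

theorem duplicate_replacement_entropy_le_general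
    {W Ω : Type*} [Fintype W] [Fintype Ω] [DecidableEq Ω]
    (ρ : W → ℝ) (hρ0 : ∀ w, 0 ≤ ρ w)
    (B : ℕ) (g : Fin B → W → Ω)
    (i₀ j₀ : Fin B) (hij : i₀ ≠ j₀) (hdup : g i₀ = g j₀)
    (g' : W → Ω) :
    pushEnt ρ (fun w => fun i => g i w) ≤
      pushEnt ρ (fun w => fun i => Function.update g j₀ g' i w) := by
  let copy : (Fin B → Ω) → (Fin B → Ω) := fun v => Function.update v j₀ (v i₀)
  have h_factor : (fun w i => g i w) = copy ∘ fun w i => Function.update g j₀ g' i w := by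
    funext w i
    by_cases hi : i = j₀
    · subst hi
      simp [copy, Function.update_of_ne hij, ← hdup]
    · simp [copy, Function.update_of_ne hi]
  rw [h_factor]
  exact pushEnt_comp_le ρ hρ0 _ copy

theorem duplicate_replacement_entropy_le
    {W Ω : Type*} [Fintype W] [Fintype Ω] [DecidableEq Ω] [DecidableEq W]
    (ρ : W → ℝ) (hρ0 : ∀ w, 0 ≤ ρ w) (hρ1 : ∑ w, ρ w = 1)
    (B : ℕ) (hB : 2 ≤ B) (g : Fin B → W → Ω)
    (i₀ j₀ : Fin B) (hij : i₀ ≠ j₀) (hdup : g i₀ = g j₀)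
    (g' : W → Ω) :
    pushEnt ρ (fun w => fun i => g i w) ≤
      pushEnt ρ (fun w => fun i => Function.update g j₀ g' i w) :=
  duplicate_replacement_entropy_le_general ρ hρ0 B g i₀ j₀ hij hdup g'
end

section
/- There exist a finite type W equipped with the uniform probability vector ρ (ρ w = 1/|W| for all w), a finite type Ω with decidable equality, a finite type Π with card Π ≥ 2, a map Φ : Π → W → Ω, and an integer B ≥ 2 with B ≤ card Π, such that for every single policy π ∈ Π, the Shannon entropy of the pushforward of ρ under the constant-tuple map w ↦ (i : Fin B) ↦ Φ π w is strictly less than the maximum over all tuples π' : Fin B → Π of the Shannon entropy of the pushforward of ρ under w ↦ (i ↦ Φ (π' i) w). -/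
lemma pushEnt_uniform {W T : Type*} [Fintype W] [Fintype T] [DecidableEq T]
    (f : W → T) (k : ℕ) (hk : 0 < k) (hT : 0 < Fintype.card T)
    (hf : ∀ t, (Finset.univ.filter fun w => f w = t).card = k)
    (hn : Fintype.card W = k * Fintype.card T) :
    pushEnt (fun _ => 1 / (Fintype.card W : ℝ)) f = Real.log (Fintype.card T) := by
  have hT0 : (Fintype.card T : ℝ) ≠ 0 := by positivity
  have hk0 : (k : ℝ) ≠ 0 := by positivity
  have hmass : ∀ t : T,
      (∑ w ∈ Finset.univ.filter fun w => f w = t, (1 / (Fintype.card W : ℝ)))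
        = 1 / (Fintype.card T : ℝ) := by
    intro t
    rw [Finset.sum_const, hf t, nsmul_eq_mul, hn]
    push_cast
    field_simp
  unfold pushEnt
  simp only [hmass, one_div_one_div]
  rw [Finset.sum_const, Finset.card_univ, nsmul_eq_mul]
  field_simp

lemma pushEnt_comp {W T T' : Type*} [Fintype W] [Fintype T] [DecidableEq T]
    [Fintype T'] [DecidableEq T'] (ρ : W → ℝ) (f : W → T) (g : T → T')
    (hg : Function.Injective g) :
    pushEnt ρ (fun w => g (f w)) = pushEnt ρ f := by
  unfold pushEnt
  rw [← Finset.sum_subset (Finset.subset_univ (Finset.univ.image g))]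
  · rw [Finset.sum_image (fun a _ b _ h => hg h)]
    refine Finset.sum_congr rfl fun t _ => ?_
    have : (Finset.univ.filter fun w => g (f w) = g t)
        = Finset.univ.filter fun w => f w = t := by
      ext w; simp [hg.eq_iff]
    rw [this]
  · intro t' _ ht'
    have : (Finset.univ.filter fun w => g (f w) = t') = ∅ := by
      ext w
      simp only [Finset.mem_filter, Finset.mem_univ, true_and, Finset.notMem_empty,
        iff_false]
      intro h
      exact ht' (Finset.mem_image.2 ⟨f w, Finset.mem_univ _, h⟩)
    rw [this]
    simp

lemma filter_card_of_bij {W T : Type*} [Fintype W] [Fintype T] [DecidableEq T]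
    (f : W → T) (hf : Function.Bijective f) (t : T) :
    (Finset.univ.filter fun w => f w = t).card = 1 := by
  obtain ⟨w, hw⟩ := hf.surjective t
  rw [Finset.card_eq_one]
  refine ⟨w, ?_⟩
  ext w'
  simp only [Finset.mem_filter, Finset.mem_univ, true_and, Finset.mem_singleton]
  constructor
  · intro h; exact hf.injective (h.trans hw.symm)
  · rintro rfl; exact hw

/-- Two policies on a 4-element world: policy 0 reads bit 0, policy 1 reads bit 1. -/
def Phi2 : Fin 2 → Fin 4 → Fin 2 := fun p w =>
  if p = 0 then ⟨w.val % 2, by omega⟩ else ⟨w.val / 2, by omega⟩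

theorem single_policy_batch_suboptimal :
    ∃ (nW nΩ nP B : ℕ) (ρ : Fin nW → ℝ) (Φ : Fin nP → Fin nW → Fin nΩ) (Hmax : ℝ),
      1 ≤ nW ∧ (∀ w, ρ w = 1 / (nW : ℝ)) ∧ 2 ≤ nP ∧ 2 ≤ B ∧ B ≤ nP ∧
      IsGreatest (Set.range fun π' : Fin B → Fin nP =>
        pushEnt ρ fun w => fun i => Φ (π' i) w) Hmax ∧
      ∀ π : Fin nP, pushEnt ρ (fun w => fun _ : Fin B => Φ π w) < Hmax := by
  have hρ : (fun _ : Fin 4 => (1 : ℝ) / 4)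
      = fun _ => 1 / (Fintype.card (Fin 4) : ℝ) := by norm_num
  -- single (constant) tuples give entropy log 2
  have hsingle : ∀ p : Fin 2,
      pushEnt (fun _ : Fin 4 => (1 : ℝ) / 4) (fun w => fun _ : Fin 2 => Phi2 p w)
        = Real.log 2 := by
    intro p
    have hg : Function.Injective (fun t : Fin 2 => fun _ : Fin 2 => t) :=
      fun a b h => congrFun h 0
    have := pushEnt_comp (fun _ : Fin 4 => (1 : ℝ) / 4) (Phi2 p)
      (fun t => fun _ : Fin 2 => t) hg
    rw [show (fun w => fun _ : Fin 2 => Phi2 p w)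
        = (fun w => (fun t => fun _ : Fin 2 => t) (Phi2 p w)) from rfl, this, hρ,
      pushEnt_uniform (Phi2 p) 2 (by norm_num) (by simp)
        (by fin_cases p <;> decide) (by simp)]
    norm_num
  -- non-constant tuples give entropy log 4
  have hmix : ∀ π' : Fin 2 → Fin 2, π' 0 ≠ π' 1 →
      pushEnt (fun _ : Fin 4 => (1 : ℝ) / 4) (fun w => fun i => Phi2 (π' i) w)
        = Real.log 4 := by
    intro π' hne
    have hinj : Function.Injective (fun w : Fin 4 => fun i : Fin 2 => Phi2 (π' i) w) := by
      intro w w' h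
      have h0 := congrFun h 0
      have h1 := congrFun h 1
      simp only at h0 h1
      have hkey : ∀ w w' : Fin 4, Phi2 0 w = Phi2 0 w' → Phi2 1 w = Phi2 1 w' → w = w' := by
        decide
      have hcase : ∀ a b : Fin 2, a ≠ b → (a = 0 ∧ b = 1) ∨ (a = 1 ∧ b = 0) := by decide
      rcases hcase _ _ hne with ⟨ha, hb⟩ | ⟨ha, hb⟩
      · rw [ha] at h0; rw [hb] at h1
        exact hkey w w' h0 h1
      · rw [ha] at h0; rw [hb] at h1
        exact hkey w w' h1 h0
    have hbij : Function.Bijective (fun w : Fin 4 => fun i : Fin 2 => Phi2 (π' i) w) :=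
      (Fintype.bijective_iff_injective_and_card _).2 ⟨hinj, by decide⟩
    rw [hρ, pushEnt_uniform _ 1 one_pos (by decide)
      (filter_card_of_bij _ hbij) (by decide)]
    norm_num [Fintype.card_fun]
  refine ⟨4, 2, 2, 2, fun _ => 1 / 4, Phi2, Real.log 4, by norm_num, by norm_num,
    le_refl 2, le_refl 2, le_refl 2, ⟨⟨fun i => i, ?_⟩, ?_⟩, ?_⟩
  · exact hmix (fun i => i) (by decide)
  · rintro x ⟨π', rfl⟩
    show pushEnt (fun _ : Fin 4 => (1 : ℝ) / 4) (fun w => fun i => Phi2 (π' i) w)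
      ≤ Real.log 4
    by_cases h : π' 0 = π' 1
    · have he : (fun w : Fin 4 => fun i : Fin 2 => Phi2 (π' i) w)
          = fun w => fun _ : Fin 2 => Phi2 (π' 0) w := by
        funext w i
        fin_cases i
        · rfl
        · simp [← h]
      rw [he, hsingle]
      exact Real.log_le_log (by norm_num) (by norm_num)
    · rw [hmix π' h]
  · intro π
    rw [hsingle]
    exact Real.log_lt_log (by norm_num) (by norm_num)
end
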